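/- arXiv:0712.3688 — 2 statements merged into one kernel-verified Lean document; each statement's English description precedes it below -/
import Mathlib

section
/- The Gromov–Hausdorff–Prokhorov distance separates points: if (X,d,μ) and (X',d',μ') are nonempty compact metric spaces equipped with Borel probability measures and d_GHP((X,d,μ),(X',d',μ')) = 0, then there exists a bijective isometry h : X → X' such that the pushforward of μ under h equals μ'. -/
open MeasureTheory Set

section GHP

variable {X Y : Type*}

/-- A "glue metric": a metric on the disjoint union `X ⊕ Y` whose restrictions to `X`
and `Y` coincide with the given metrics. -/
structure IsGlueMetric [MetricSpace X] [MetricSpace Y] (δ : X ⊕ Y → X ⊕ Y → ℝ) : Prop where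
  refl : ∀ a, δ a a = 0
  pos : ∀ a b, a ≠ b → 0 < δ a b
  symm : ∀ a b, δ a b = δ b a
  triangle : ∀ a b c, δ a c ≤ δ a b + δ b c
  restr_left : ∀ x x' : X, δ (Sum.inl x) (Sum.inl x') = dist x x'
  restr_right : ∀ y y' : Y, δ (Sum.inr y) (Sum.inr y') = dist y y'

/-- The Hausdorff distance, in `(X ⊕ Y, δ)`, between (the images of) `X` and `Y`:
the infimum of `ε > 0` such that each space is contained in the open `ε`-neighborhood
of the other. -/
noncomputable def glueHausdorffDist (δ : X ⊕ Y → X ⊕ Y → ℝ) : ℝ :=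
  sInf {ε : ℝ | 0 < ε ∧ (∀ x : X, ∃ y : Y, δ (Sum.inl x) (Sum.inr y) < ε) ∧
    (∀ y : Y, ∃ x : X, δ (Sum.inl x) (Sum.inr y) < ε)}

/-- The Prokhorov distance, in `(X ⊕ Y, δ)`, between the pushforwards of `μ` and `ν`:
the infimum of `ε > 0` such that `μ(C) ≤ ν(C^ε) + ε` for every `δ`-closed set `C`,
where `C^ε` is the open `ε`-neighborhood for `δ`. -/
noncomputable def glueProkhorovDist [MeasurableSpace X] [MeasurableSpace Y]
    (δ : X ⊕ Y → X ⊕ Y → ℝ) (μ : Measure X) (ν : Measure Y) : ℝ :=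
  sInf {ε : ℝ | 0 < ε ∧ ∀ C : Set (X ⊕ Y),
    (∀ a ∉ C, ∃ η > 0, ∀ b ∈ C, η ≤ δ a b) →
    μ (Sum.inl ⁻¹' C) ≤ ν (Sum.inr ⁻¹' {a | ∃ b ∈ C, δ a b < ε}) + ENNReal.ofReal ε}

/-- The Gromov–Hausdorff–Prokhorov distance between two metric spaces equipped with
Borel measures: the infimum, over all metrics `δ` on the disjoint union restricting to
the given metrics, of the maximum of the Hausdorff distance between the two spaces and
the Prokhorov distance between the pushforward measures. -/
noncomputable def ghpDist [MetricSpace X] [MetricSpace Y]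
    [MeasurableSpace X] [MeasurableSpace Y] (μ : Measure X) (ν : Measure Y) : ℝ :=
  sInf {r : ℝ | ∃ δ : X ⊕ Y → X ⊕ Y → ℝ, IsGlueMetric δ ∧
    r = max (glueHausdorffDist δ) (glueProkhorovDist δ μ ν)}

end GHP

/-! For every `n`, a GHP distance below `εₙ = 1/(n+1)` provides a gluing `δₙ` of `X` and `Y` in
which the two spaces are `εₙ`-Hausdorff close and the two measures `εₙ`-Prokhorov close.
Moving each point of `X` to a `δₙ`-nearby point of `Y` gives `2εₙ`-isometries `Fₙ : X → Y` with
`2εₙ`-dense image. Their pointwise limit along an ultrafilter on `ℕ`, which exists because `Y` is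
compact, is an isometry `f`; compactness of `X` makes the convergence uniform, hence `f` is onto.
Uniform closeness of `f` and `Fₙ` turns the Prokhorov bound in the gluing into a Lévy–Prokhorov
bound between `f_* μ` and `μ'` in `Y`, so these two probability measures coincide. -/

open Filter Metric Topology

section Closeness

variable {X Y : Type*} {δ : X ⊕ Y → X ⊕ Y → ℝ} {ε ε' : ℝ}

def IsGlueClosed (δ : X ⊕ Y → X ⊕ Y → ℝ) (C : Set (X ⊕ Y)) : Prop :=
  ∀ a ∉ C, ∃ η > 0, ∀ b ∈ C, η ≤ δ a b

def IsHausdorffClose (δ : X ⊕ Y → X ⊕ Y → ℝ) (ε : ℝ) : Prop :=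
  (∀ x : X, ∃ y : Y, δ (.inl x) (.inr y) < ε) ∧ ∀ y : Y, ∃ x : X, δ (.inl x) (.inr y) < ε

def IsProkhorovClose [MeasurableSpace X] [MeasurableSpace Y]
    (δ : X ⊕ Y → X ⊕ Y → ℝ) (μ : Measure X) (ν : Measure Y) (ε : ℝ) : Prop :=
  ∀ C, IsGlueClosed δ C →
    μ (.inl ⁻¹' C) ≤ ν (.inr ⁻¹' {a | ∃ b ∈ C, δ a b < ε}) + ENNReal.ofReal ε

theorem IsHausdorffClose.mono (h : IsHausdorffClose δ ε) (hε : ε ≤ ε') :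
    IsHausdorffClose δ ε' :=
  ⟨fun x => (h.1 x).imp fun _ hy => hy.trans_le hε,
    fun y => (h.2 y).imp fun _ hx => hx.trans_le hε⟩

variable [MeasurableSpace X] [MeasurableSpace Y] {μ : Measure X} {ν : Measure Y}

theorem IsProkhorovClose.mono (h : IsProkhorovClose δ μ ν ε) (hε : ε ≤ ε') :
    IsProkhorovClose δ μ ν ε' := fun C hC => by
  refine (h C hC).trans (add_le_add (measure_mono fun y => ?_) (ENNReal.ofReal_le_ofReal hε))
  exact fun ⟨b, hb, hyb⟩ => ⟨b, hb, hyb.trans_le hε⟩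

theorem isProkhorovClose_one [IsZeroOrProbabilityMeasure μ] : IsProkhorovClose δ μ ν 1 :=
  fun _ _ => prob_le_one.trans (by simp)

theorem isProkhorovClose_of_glueProkhorovDist_lt [IsZeroOrProbabilityMeasure μ]
    (h : glueProkhorovDist δ μ ν < ε) : IsProkhorovClose δ μ ν ε := by
  unfold glueProkhorovDist at h
  obtain ⟨ε₁, ⟨-, hδε₁⟩, hε₁⟩ :=
    exists_lt_of_csInf_lt (by exact ⟨1, one_pos, isProkhorovClose_one⟩) h
  exact IsProkhorovClose.mono hδε₁ hε₁.le

end Closeness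

section Glue

variable {X Y : Type*} [MetricSpace X] [MetricSpace Y] {δ : X ⊕ Y → X ⊕ Y → ℝ} {ε : ℝ}

theorem isGlueMetric_sumDist [Nonempty X] [Nonempty Y] :
    IsGlueMetric (Metric.Sum.dist : X ⊕ Y → X ⊕ Y → ℝ) :=
  letI := Metric.metricSpaceSum (X := X) (Y := Y)
  { refl := dist_self
    pos := fun _ _ h => dist_pos.2 h
    symm := dist_comm
    triangle := dist_triangle
    restr_left := fun _ _ => rfl
    restr_right := fun _ _ => rfl }

namespace IsGlueMetric

variable (hδ : IsGlueMetric δ)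
include hδ

theorem inl_inr_le (x x' : X) (y y' : Y) :
    δ (.inl x) (.inr y) ≤ dist x x' + δ (.inl x') (.inr y') + dist y' y := by
  have h₁ := hδ.triangle (.inl x) (.inl x') (.inr y)
  have h₂ := hδ.triangle (.inl x') (.inr y') (.inr y)
  rw [hδ.restr_left] at h₁
  rw [hδ.restr_right] at h₂
  linarith

theorem dist_inr_le (x x' : X) (y y' : Y) :
    dist y y' ≤ δ (.inl x) (.inr y) + dist x x' + δ (.inl x') (.inr y') := by
  have h₁ := hδ.triangle (.inr y) (.inl x) (.inr y')
  have h₂ := hδ.triangle (.inl x) (.inl x') (.inr y')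
  rw [hδ.restr_right] at h₁
  rw [hδ.restr_left] at h₂
  linarith [hδ.symm (.inr y) (.inl x)]

theorem dist_inl_le (x x' : X) (y y' : Y) :
    dist x x' ≤ δ (.inl x) (.inr y) + dist y y' + δ (.inl x') (.inr y') := by
  have h₁ := hδ.triangle (.inl x) (.inr y) (.inl x')
  have h₂ := hδ.triangle (.inr y) (.inr y') (.inl x')
  rw [hδ.restr_left] at h₁
  rw [hδ.restr_right] at h₂
  linarith [hδ.symm (.inr y') (.inl x')]

theorem abs_dist_sub_dist_le (x x' : X) (y y' : Y) :
    |dist y y' - dist x x'| ≤ δ (.inl x) (.inr y) + δ (.inl x') (.inr y') := by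
  rw [abs_sub_le_iff]
  constructor <;> linarith [hδ.dist_inr_le x x' y y', hδ.dist_inl_le x x' y y']

theorem lipschitzWith_inl (a : X ⊕ Y) : LipschitzWith 1 fun x : X => δ a (.inl x) :=
  LipschitzWith.of_le_add fun x x' => by
    simpa [hδ.restr_left, dist_comm] using hδ.triangle a (.inl x') (.inl x)

theorem isGlueClosed_image_inl {A : Set X} (hA : IsCompact A) :
    IsGlueClosed δ (.inl '' A) := by
  intro a ha
  obtain ⟨η, hη, hle⟩ := hA.exists_forall_le' (hδ.lipschitzWith_inl a).continuous.continuousOn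
    (a := 0) fun x hx => hδ.pos _ _ fun h => ha ⟨x, hx, h.symm⟩
  exact ⟨η, hη, by rintro _ ⟨x, hx, rfl⟩; exact hle x hx⟩

theorem exists_isHausdorffClose [BoundedSpace X] [BoundedSpace Y] [Nonempty X] [Nonempty Y] :
    ∃ ε > 0, IsHausdorffClose δ ε := by
  obtain ⟨x₀⟩ := ‹Nonempty X›
  obtain ⟨y₀⟩ := ‹Nonempty Y›
  have hX (x : X) : dist x x₀ ≤ diam (univ : Set X) :=
    dist_le_diam_of_mem (Bornology.isBounded_univ.2 ‹_›) (mem_univ _) (mem_univ _)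
  have hY (y : Y) : dist y₀ y ≤ diam (univ : Set Y) :=
    dist_le_diam_of_mem (Bornology.isBounded_univ.2 ‹_›) (mem_univ _) (mem_univ _)
  have h₀ : 0 ≤ δ (.inl x₀) (.inr y₀) := (hδ.pos _ _ Sum.inl_ne_inr).le
  refine ⟨diam (univ : Set X) + δ (.inl x₀) (.inr y₀) + diam (univ : Set Y) + 1,
    by positivity, fun x => ⟨y₀, ?_⟩, fun y => ⟨x₀, ?_⟩⟩
  · linarith [hδ.inl_inr_le x x₀ y₀ y₀, hX x, hY y₀]
  · linarith [hδ.inl_inr_le x₀ x₀ y y₀, hX x₀, hY y]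

theorem isHausdorffClose_of_glueHausdorffDist_lt [BoundedSpace X] [BoundedSpace Y]
    [Nonempty X] [Nonempty Y] (h : glueHausdorffDist δ < ε) : IsHausdorffClose δ ε := by
  unfold glueHausdorffDist at h
  obtain ⟨ε₀, hε₀, hδε₀⟩ := hδ.exists_isHausdorffClose
  obtain ⟨ε₁, ⟨-, hδε₁⟩, hε₁⟩ := exists_lt_of_csInf_lt (by exact ⟨ε₀, hε₀, hδε₀⟩) h
  exact IsHausdorffClose.mono hδε₁ hε₁.le

end IsGlueMetric

theorem IsHausdorffClose.exists_approx_isometry (h : IsHausdorffClose δ ε)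
    (hδ : IsGlueMetric δ) :
    ∃ F : X → Y, (∀ x, δ (.inl x) (.inr (F x)) < ε) ∧
      (∀ x x', |dist (F x) (F x') - dist x x'| ≤ 2 * ε) ∧ ∀ y, ∃ x, dist (F x) y ≤ 2 * ε := by
  choose F hF using h.1
  refine ⟨F, hF, fun x x' => (hδ.abs_dist_sub_dist_le x x' _ _).trans ?_, fun y => ?_⟩
  · linarith [hF x, hF x']
  · obtain ⟨x, hx⟩ := h.2 y
    exact ⟨x, by linarith [hδ.dist_inr_le x x (F x) y, dist_self x, hF x]⟩

variable [MeasurableSpace X] [MeasurableSpace Y] {μ : Measure X} {ν : Measure Y}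

theorem exists_isGlueMetric_of_ghpDist_lt [BoundedSpace X] [BoundedSpace Y]
    [Nonempty X] [Nonempty Y] [IsZeroOrProbabilityMeasure μ] (h : ghpDist μ ν < ε) :
    ∃ δ : X ⊕ Y → X ⊕ Y → ℝ,
      IsGlueMetric δ ∧ IsHausdorffClose δ ε ∧ IsProkhorovClose δ μ ν ε := by
  unfold ghpDist at h
  obtain ⟨_, ⟨δ, hδ, rfl⟩, hδε⟩ :=
    exists_lt_of_csInf_lt (by exact ⟨_, _, isGlueMetric_sumDist, rfl⟩) h
  exact ⟨δ, hδ, hδ.isHausdorffClose_of_glueHausdorffDist_lt (le_max_left _ _ |>.trans_lt hδε),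
    isProkhorovClose_of_glueProkhorovDist_lt (le_max_right _ _ |>.trans_lt hδε)⟩

theorem IsProkhorovClose.measure_preimage_le_thickening [CompactSpace X]
    (hP : IsProkhorovClose δ μ ν ε) (hδ : IsGlueMetric δ) {f : X → Y} (hf : Continuous f)
    {s : ℝ} (hfδ : ∀ x, δ (.inl x) (.inr (f x)) < s) {D : Set Y} (hD : IsClosed D) :
    μ (f ⁻¹' D) ≤ ν (thickening (ε + s) D) + ENNReal.ofReal ε := by
  have h := hP _ (hδ.isGlueClosed_image_inl (hD.preimage hf).isCompact)
  rw [preimage_image_eq _ Sum.inl_injective] at h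
  refine h.trans (add_le_add (measure_mono ?_) le_rfl)
  rintro y ⟨_, ⟨x, hx, rfl⟩, hxy⟩
  refine mem_thickening_iff.2 ⟨f x, hx, ?_⟩
  linarith [hδ.dist_inr_le x x y (f x), dist_self x, hδ.symm (.inr y) (.inl x), hfδ x]

end Glue

section ApproximateIsometries

variable {ι X Y : Type*} [MetricSpace X] [MetricSpace Y]
  {F : ι → X → Y} {f : X → Y} {e : ι → ℝ} {l : Filter ι}

theorem isometry_of_tendsto_of_abs_dist_sub_le [l.NeBot] (he : Tendsto e l (𝓝 0))
    (hF : ∀ i x x', |dist (F i x) (F i x') - dist x x'| ≤ e i)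
    (hf : ∀ x, Tendsto (F · x) l (𝓝 (f x))) : Isometry f :=
  Isometry.of_dist_eq fun x x' => tendsto_nhds_unique ((hf x).dist (hf x')) <|
    tendsto_iff_dist_tendsto_zero.2 <| squeeze_zero (fun _ => dist_nonneg) (fun i => hF i x x') he

theorem tendstoUniformly_of_tendsto_of_abs_dist_sub_le [CompactSpace X]
    (he : Tendsto e l (𝓝 0)) (hF : ∀ i x x', |dist (F i x) (F i x') - dist x x'| ≤ e i)
    (hf : ∀ x, Tendsto (F · x) l (𝓝 (f x))) (hlip : LipschitzWith 1 f) :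
    TendstoUniformly F f l := by
  refine Metric.tendstoUniformly_iff.2 fun r hr => ?_
  have hr₄ : 0 < r / 4 := by positivity
  obtain ⟨t, -, ht, hcover⟩ := finite_cover_balls_of_compact (isCompact_univ (X := X)) hr₄
  have hnet : ∀ᶠ i in l, ∀ s ∈ t, dist (F i s) (f s) < r / 4 :=
    (eventually_all_finite ht).2 fun s _ => Metric.tendsto_nhds.1 (hf s) _ hr₄
  filter_upwards [hnet, he.eventually (gt_mem_nhds hr₄)] with i hi hei x
  obtain ⟨s, hs, hxs⟩ := mem_iUnion₂.1 (hcover (mem_univ x))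
  have hFs := (abs_sub_le_iff.1 (hF i s x)).1
  have hfs : dist (f x) (f s) ≤ dist x s := by simpa using hlip.dist_le_mul x s
  calc dist (f x) (F i x) ≤ dist (f x) (f s) + dist (f s) (F i s) + dist (F i s) (F i x) :=
        dist_triangle4 _ _ _ _
    _ < r := by
        linarith [hi s hs, dist_comm (f s) (F i s), dist_comm s x, mem_ball.1 hxs]

theorem surjective_of_tendstoUniformly [CompactSpace X] [l.NeBot] (he : Tendsto e l (𝓝 0))
    (hsurj : ∀ i y, ∃ x, dist (F i x) y ≤ e i) (hf : Continuous f)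
    (hFf : TendstoUniformly F f l) : Function.Surjective f := by
  intro y
  refine (isCompact_range hf).isClosed.closure_subset (Metric.mem_closure_iff.2 fun r hr => ?_)
  obtain ⟨i, hi, hei⟩ := ((Metric.tendstoUniformly_iff.1 hFf _ (half_pos hr)).and
    (he.eventually (gt_mem_nhds (half_pos hr)))).exists
  obtain ⟨x, hx⟩ := hsurj i y
  refine ⟨f x, mem_range_self x, ?_⟩
  linarith [dist_triangle y (F i x) (f x), hi x, dist_comm (f x) (F i x), dist_comm y (F i x)]

theorem exists_isometryEquiv_tendstoUniformly [CompactSpace X] [CompactSpace Y]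
    (U : Ultrafilter ι) (he : Tendsto e U (𝓝 0))
    (hF : ∀ i x x', |dist (F i x) (F i x') - dist x x'| ≤ e i)
    (hsurj : ∀ i y, ∃ x, dist (F i x) y ≤ e i) :
    ∃ f : X ≃ᵢ Y, TendstoUniformly F f U := by
  let f x := (U.map (F · x)).lim
  have hf x : Tendsto (F · x) U (𝓝 (f x)) := (U.map (F · x)).le_nhds_lim
  have hiso := isometry_of_tendsto_of_abs_dist_sub_le he hF hf
  have hFf := tendstoUniformly_of_tendsto_of_abs_dist_sub_le he hF hf hiso.lipschitz
  exact ⟨⟨Equiv.ofBijective f ⟨hiso.injective,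
    surjective_of_tendstoUniformly he hsurj hiso.continuous hFf⟩, hiso⟩, hFf⟩

end ApproximateIsometries

theorem MeasureTheory.Measure.eq_of_forall_measure_le_thickening_add {Ω : Type*}
    [PseudoMetricSpace Ω] [MeasurableSpace Ω] [BorelSpace Ω]
    (μ ν : Measure Ω) [IsProbabilityMeasure μ] [IsProbabilityMeasure ν]
    (h : ∀ r > 0, ∀ D, IsClosed D → μ D ≤ ν (thickening r D) + ENNReal.ofReal r) : μ = ν := by
  have hLP : levyProkhorovDist μ ν ≤ 0 :=
    levyProkhorovDist_le_of_forall_le μ ν le_rfl fun r B hr _ =>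
      calc μ B ≤ μ (closure B) := measure_mono subset_closure
        _ ≤ ν (thickening r B) + ENNReal.ofReal r := by
          simpa only [thickening_closure] using h r hr _ isClosed_closure
  have := dist_le_zero.1 (show dist (LevyProkhorov.ofMeasure (α := ProbabilityMeasure Ω)
    ⟨μ, ‹_›⟩) (.ofMeasure ⟨ν, ‹_›⟩) ≤ 0 from hLP)
  simpa using congrArg (fun P => P.toMeasure.toMeasure) this

/-- The Gromov–Hausdorff–Prokhorov distance separates points: two compact metric
measure spaces at GHP distance zero are related by a measure-preserving bijective
isometry. -/
theorem ghpDist_eq_zero_iff_isometry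
    {X Y : Type*} [MetricSpace X] [MetricSpace Y]
    [CompactSpace X] [CompactSpace Y] [Nonempty X] [Nonempty Y]
    [MeasurableSpace X] [BorelSpace X] [MeasurableSpace Y] [BorelSpace Y]
    (μ : Measure X) (μ' : Measure Y)
    [IsProbabilityMeasure μ] [IsProbabilityMeasure μ']
    (h : ghpDist μ μ' = 0) :
    ∃ h : X ≃ᵢ Y, Measure.map (⇑h) μ = μ' := by
  let ε (n : ℕ) : ℝ := 1 / (n + 1)
  have hε n : ghpDist μ μ' < ε n := h ▸ Nat.one_div_pos_of_nat
  choose δ hδ hH hP using fun n => exists_isGlueMetric_of_ghpDist_lt (hε n)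
  choose F hFδ hF_approx hF_dense using fun n => (hH n).exists_approx_isometry (hδ n)
  let U : Ultrafilter ℕ := .of atTop
  have hεU : Tendsto ε U (𝓝 0) :=
    tendsto_one_div_add_atTop_nhds_zero_nat.mono_left (Ultrafilter.of_le _)
  obtain ⟨f, hFf⟩ := exists_isometryEquiv_tendstoUniformly U
    (by simpa using hεU.const_mul 2) hF_approx hF_dense
  have := Measure.isProbabilityMeasure_map (μ := μ) f.continuous.aemeasurable
  refine ⟨f, Measure.eq_of_forall_measure_le_thickening_add _ _ fun r hr D hD => ?_⟩
  obtain ⟨n, hFn, hεn⟩ := ((Metric.tendstoUniformly_iff.1 hFf _ (half_pos hr)).and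
    (hεU.eventually (gt_mem_nhds (by positivity : 0 < r / 4)))).exists
  have hfδ x : δ n (.inl x) (.inr (f x)) < ε n + r / 2 := by
    linarith [(hδ n).inl_inr_le x x (f x) (F n x), dist_self x, hFδ n x, hFn x,
      dist_comm (f x) (F n x)]
  rw [Measure.map_apply f.continuous.measurable hD.measurableSet]
  calc μ (f ⁻¹' D) ≤ μ' (thickening (ε n + (ε n + r / 2)) D) + ENNReal.ofReal (ε n) :=
        (hP n).measure_preimage_le_thickening (hδ n) f.continuous hfδ hD
    _ ≤ μ' (thickening r D) + ENNReal.ofReal r := by gcongr <;> linarith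
end

section
/- Let (X_n, d_n) be nonempty compact geodesic metric spaces with marked points x_n, y_n ∈ X_n, and let (X, d) be a nonempty compact geodesic metric space with marked points x, y ∈ X, d(x,y) > 0. Suppose there exist compact correspondences ℛ_n between X_n and X with (x_n, x) ∈ ℛ_n, (y_n, y) ∈ ℛ_n and dis ℛ_n → 0. Let D_n ∈ (−d_n(x_n,y_n), d_n(x_n,y_n)) converge to D ∈ (−d(x,y), d(x,y)). Assume that for every ε > 0 there exists δ > 0 such that limsup_{n→∞} diam(medqg^{D_n,δ}_{x_n y_n}(X_n)) < ε. Then there exists exactly one point z ∈ X with d(x,z) − d(y,z) = D that lies on some geodesic from x to y. -/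
open Filter

section Geodesic

variable {Z : Type*} [MetricSpace Z]

/-- `γ` is a geodesic from `x` to `y`: an isometric path `[0, d(x,y)] → Z` from `x`
to `y`. -/
def IsGeodesicFromTo (γ : ℝ → Z) (x y : Z) : Prop :=
  γ 0 = x ∧ γ (dist x y) = y ∧
    ∀ s ∈ Set.Icc (0 : ℝ) (dist x y), ∀ t ∈ Set.Icc (0 : ℝ) (dist x y),
      dist (γ s) (γ t) = |s - t|

/-- A geodesic metric space: any two points are joined by a geodesic. -/
def IsGeodesicSpace (Z : Type*) [MetricSpace Z] : Prop :=
  ∀ x y : Z, ∃ γ : ℝ → Z, IsGeodesicFromTo γ x y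

/-- The set `medqg^{D,δ}_{xy}`: points `z` with `d(x,z) − d(y,z) = D` lying on a
`δ`-quasi geodesic from `x` to `y` (`d(x,z) + d(y,z) ≤ d(x,y) + δ`). -/
def medqg (x y : Z) (D δ : ℝ) : Set Z :=
  {z : Z | dist x z - dist y z = D ∧ dist x z + dist y z ≤ dist x y + δ}

end Geodesic

section Corr

variable {X Y : Type*}

/-- A correspondence between `X` and `Y`. -/
def IsCorrespondence (R : Set (X × Y)) : Prop :=
  (∀ x : X, ∃ y : Y, (x, y) ∈ R) ∧ (∀ y : Y, ∃ x : X, (x, y) ∈ R)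

/-- The distortion of a correspondence. -/
noncomputable def distortion [MetricSpace X] [MetricSpace Y] (R : Set (X × Y)) : ℝ :=
  sSup {r : ℝ | ∃ p ∈ R, ∃ q ∈ R, r = |dist p.1 q.1 - dist p.2 q.2|}

end Corr

/-!
Parametrise every geodesic from `x` to `y` by arc length: its `D`-median point is its point at
time `t = (d(x,y) + D)/2`, so existence is immediate and uniqueness amounts to two such points
`z, z'` on geodesics `γ, γ'` coinciding. Pull points of `γ` slightly before and after `z` back
to `a, b ∈ X_n` through `ℛ_n`; on a geodesic from `a` to `b` the function
`d(x_n, ·) − d(y_n, ·)` takes the value `D_n` at some `u`, which lies in `medqg^{D_n, 4 dis ℛ_n}` and is close to a correspondent of `z`.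
Doing the same for `z'` bounds `d(z, z')` by the diameter of that set plus a multiple of
`dis ℛ_n + |D_n − D|`, which tends to `0`.
-/

open Set Metric Bornology

namespace IsGeodesicFromTo

variable {Z : Type*} [MetricSpace Z] {γ : ℝ → Z} {x y : Z} {s : ℝ}

theorem dist_left (h : IsGeodesicFromTo γ x y) (hs : s ∈ Icc 0 (dist x y)) :
    dist x (γ s) = s := by
  rw [← h.1, h.2.2 0 ⟨le_rfl, dist_nonneg⟩ s hs, zero_sub, abs_neg, abs_of_nonneg hs.1]

theorem dist_right (h : IsGeodesicFromTo γ x y) (hs : s ∈ Icc 0 (dist x y)) :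
    dist y (γ s) = dist x y - s := by
  rw [← h.2.1, h.2.2 _ ⟨dist_nonneg, le_rfl⟩ s hs, h.2.1, abs_of_nonneg (sub_nonneg.2 hs.2)]

theorem dist_sub_dist (h : IsGeodesicFromTo γ x y) (hs : s ∈ Icc 0 (dist x y)) :
    dist x (γ s) - dist y (γ s) = 2 * s - dist x y := by
  rw [h.dist_left hs, h.dist_right hs]
  ring

theorem continuousOn (h : IsGeodesicFromTo γ x y) : ContinuousOn γ (Icc 0 (dist x y)) :=
  (LipschitzOnWith.of_dist_le_mul fun s hs t ht => by
    rw [h.2.2 s hs t ht, Real.dist_eq, NNReal.coe_one, one_mul]).continuousOn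

end IsGeodesicFromTo

theorem IsGeodesicSpace.exists_dist_sub_dist_eq {Z : Type*} [MetricSpace Z]
    (hZ : IsGeodesicSpace Z) (p q a b : Z) {D : ℝ}
    (hD : D ∈ Icc (dist p a - dist q a) (dist p b - dist q b)) :
    ∃ u, dist p u - dist q u = D ∧ dist a u + dist u b = dist a b := by
  obtain ⟨γ, hγ⟩ := hZ a b
  have hcont : ContinuousOn (fun s => dist p (γ s) - dist q (γ s)) (Icc 0 (dist a b)) :=
    (continuous_const.dist continuous_id).comp_continuousOn hγ.continuousOn |>.sub
      ((continuous_const.dist continuous_id).comp_continuousOn hγ.continuousOn)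
  have hD' : D ∈ Icc (dist p (γ 0) - dist q (γ 0))
      (dist p (γ (dist a b)) - dist q (γ (dist a b))) := by
    rwa [hγ.1, hγ.2.1]
  obtain ⟨s, hs, hsD⟩ := intermediate_value_Icc dist_nonneg hcont hD'
  refine ⟨γ s, hsD, ?_⟩
  rw [hγ.dist_left hs, dist_comm, hγ.dist_right hs]
  ring

section Median

variable {Z : Type*} [MetricSpace Z]

theorem medqg_subset_closedBall (x y : Z) (D δ : ℝ) :
    medqg x y D δ ⊆ closedBall x (dist x y + δ) := fun z hz => by
  rw [mem_closedBall, dist_comm]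
  linarith [hz.2, dist_nonneg (x := y) (y := z)]

theorem isBounded_medqg (x y : Z) (D δ : ℝ) : IsBounded (medqg x y D δ) :=
  isBounded_closedBall.subset (medqg_subset_closedBall x y D δ)

theorem medqg_mono (x y : Z) (D : ℝ) {δ δ' : ℝ} (h : δ ≤ δ') :
    medqg x y D δ ⊆ medqg x y D δ' := fun _ hz => ⟨hz.1, hz.2.trans (by linarith)⟩

end Median

section Correspondence

variable {X Y : Type*} [MetricSpace X] [MetricSpace Y] {R : Set (X × Y)}

theorem abs_dist_sub_dist_le_distortion (hR : IsBounded R) {p q : X × Y} (hp : p ∈ R)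
    (hq : q ∈ R) : |dist p.1 q.1 - dist p.2 q.2| ≤ distortion R := by
  refine le_csSup ⟨diam R, ?_⟩ ⟨p, hp, q, hq, rfl⟩
  rintro r ⟨p, hp, q, hq, rfl⟩
  have hpq : dist p q ≤ diam R := dist_le_diam_of_mem hR hp hq
  rw [Prod.dist_eq] at hpq
  rw [abs_sub_le_iff]
  constructor <;> linarith [le_max_left (dist p.1 q.1) (dist p.2 q.2),
    le_max_right (dist p.1 q.1) (dist p.2 q.2), dist_nonneg (x := p.1) (y := q.1),
    dist_nonneg (x := p.2) (y := q.2)]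

theorem distortion_nonneg (hR : IsBounded R) {p : X × Y} (hp : p ∈ R) : 0 ≤ distortion R := by
  simpa using abs_dist_sub_dist_le_distortion hR hp hp

/-- `u` is found on a geodesic between correspondents `a, b` of `γ (t - η)` and `γ (t + η)`,
`η = dis R + e`, at which `d(x', ·) − d(y', ·)` is at most, resp. at least, `D`. -/
theorem exists_mem_medqg_near (hX : IsGeodesicSpace X) (hRsurj : ∀ y, ∃ x, (x, y) ∈ R)
    (hR : IsBounded R) {x' y' : X} {x y : Y} (hx : (x', x) ∈ R) (hy : (y', y) ∈ R)
    {t D e : ℝ} (he : |D - (2 * t - dist x y)| ≤ e)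
    (ht : t ∈ Icc (distortion R + e) (dist x y - (distortion R + e)))
    {γ : ℝ → Y} (hγ : IsGeodesicFromTo γ x y) :
    ∃ u ∈ medqg x' y' D (4 * distortion R), ∃ w, (w, γ t) ∈ R ∧
      dist u w ≤ 5 * distortion R + 3 * e := by
  obtain ⟨η, hη⟩ : ∃ η, η = distortion R + e := ⟨_, rfl⟩
  rw [← hη] at ht
  have hdis := distortion_nonneg hR hx
  have hη0 : 0 ≤ η := by linarith [(abs_nonneg _).trans he]
  have hDe := abs_le.mp he
  have hlo : t - η ∈ Icc 0 (dist x y) := ⟨by linarith [ht.1], by linarith [ht.2]⟩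
  have hhi : t + η ∈ Icc 0 (dist x y) := ⟨by linarith [ht.1], by linarith [ht.2]⟩
  have hmid : t ∈ Icc 0 (dist x y) := ⟨by linarith [ht.1], by linarith [ht.2]⟩
  have ab : dist (γ (t - η)) (γ (t + η)) = 2 * η := by
    rw [hγ.2.2 _ hlo _ hhi, abs_sub_comm, abs_of_nonneg (by linarith)]; ring
  have aw : dist (γ (t - η)) (γ t) = η := by
    rw [hγ.2.2 _ hlo _ hmid, abs_sub_comm, abs_of_nonneg (by linarith)]; ring
  have A {a b : X} {c d : Y} (hac : (a, c) ∈ R) (hbd : (b, d) ∈ R) :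
      dist a b ≤ dist c d + distortion R ∧ dist c d ≤ dist a b + distortion R := by
    have h := abs_sub_le_iff.mp (abs_dist_sub_dist_le_distortion hR hac hbd)
    exact ⟨by linarith [h.1], by linarith [h.2]⟩
  obtain ⟨w, hw⟩ := hRsurj (γ t)
  obtain ⟨a, ha⟩ := hRsurj (γ (t - η))
  obtain ⟨b, hb⟩ := hRsurj (γ (t + η))
  obtain ⟨xa₁, xa₂⟩ := A hx ha
  obtain ⟨ya₁, ya₂⟩ := A hy ha
  obtain ⟨xb₁, xb₂⟩ := A hx hb
  obtain ⟨yb₁, yb₂⟩ := A hy hb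
  obtain ⟨ab₁, -⟩ := A ha hb
  obtain ⟨aw₁, -⟩ := A ha hw
  obtain ⟨-, xy₂⟩ := A hx hy
  rw [hγ.dist_left hlo] at xa₁ xa₂
  rw [hγ.dist_right hlo] at ya₁ ya₂
  rw [hγ.dist_left hhi] at xb₁ xb₂
  rw [hγ.dist_right hhi] at yb₁ yb₂
  rw [ab] at ab₁
  rw [aw] at aw₁
  obtain ⟨u, huD, hu⟩ := hX.exists_dist_sub_dist_eq x' y' a b (D := D)
    ⟨by linarith, by linarith⟩
  refine ⟨u, ⟨huD, ?_⟩, w, hw, ?_⟩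
  · linarith [dist_triangle x' a u, dist_triangle_right y' u b]
  · linarith [dist_triangle_left u w a, dist_nonneg (x := u) (y := b)]

theorem dist_le_diam_medqg_add (hX : IsGeodesicSpace X) (hRsurj : ∀ y, ∃ x, (x, y) ∈ R)
    (hR : IsBounded R) {x' y' : X} {x y : Y} (hx : (x', x) ∈ R) (hy : (y', y) ∈ R)
    {t D e : ℝ} (he : |D - (2 * t - dist x y)| ≤ e)
    (ht : t ∈ Icc (distortion R + e) (dist x y - (distortion R + e)))
    {γ γ' : ℝ → Y} (hγ : IsGeodesicFromTo γ x y) (hγ' : IsGeodesicFromTo γ' x y) :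
    dist (γ t) (γ' t) ≤ diam (medqg x' y' D (4 * distortion R)) + 11 * distortion R + 6 * e := by
  obtain ⟨u, hu, w, hw, huw⟩ := exists_mem_medqg_near hX hRsurj hR hx hy he ht hγ
  obtain ⟨u', hu', w', hw', huw'⟩ := exists_mem_medqg_near hX hRsurj hR hx hy he ht hγ'
  have hww' := (abs_le.mp (abs_dist_sub_dist_le_distortion hR hw hw')).1
  have huu' := dist_le_diam_of_mem (isBounded_medqg x' y' D _) hu hu'
  linarith [dist_triangle4 w u u' w', dist_comm w u]

end Correspondence

open Topology in
theorem IsGeodesicFromTo.apply_eq_of_tendsto_distortion {X : ℕ → Type*}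
    [∀ n, MetricSpace (X n)] {Y : Type*} [MetricSpace Y] (hXgeo : ∀ n, IsGeodesicSpace (X n))
    {xn yn : ∀ n, X n} {x y : Y} {R : ∀ n, Set (X n × Y)} (hR : ∀ n, IsBounded (R n))
    (hRsurj : ∀ n y, ∃ x, (x, y) ∈ R n) (hx : ∀ n, (xn n, x) ∈ R n) (hy : ∀ n, (yn n, y) ∈ R n)
    (hdis : Tendsto (fun n => distortion (R n)) atTop (𝓝 0)) {Dn : ℕ → ℝ} {t : ℝ}
    (hDconv : Tendsto Dn atTop (𝓝 (2 * t - dist x y))) (ht : t ∈ Ioo 0 (dist x y))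
    (hmed : ∀ ε > 0, ∃ δ > 0, ∀ᶠ n in atTop, diam (medqg (xn n) (yn n) (Dn n) δ) < ε)
    {γ γ' : ℝ → Y} (hγ : IsGeodesicFromTo γ x y) (hγ' : IsGeodesicFromTo γ' x y) :
    γ t = γ' t := by
  set e := fun n => |Dn n - (2 * t - dist x y)|
  have he : Tendsto e atTop (𝓝 0) := by
    simpa [e] using (hDconv.sub_const (2 * t - dist x y)).abs
  have herr : Tendsto (fun n => distortion (R n) + e n) atTop (𝓝 0) := by
    simpa using hdis.add he
  have hbound : Tendsto (fun n => 11 * distortion (R n) + 6 * e n) atTop (𝓝 0) := by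
    simpa using (hdis.const_mul 11).add (he.const_mul 6)
  refine dist_le_zero.mp (le_of_forall_pos_le_add fun ε hε => ?_)
  rw [zero_add]
  obtain ⟨δ, hδ, hdiam⟩ := hmed ε hε
  refine ge_of_tendsto (add_zero ε ▸ hbound.const_add ε) ?_
  filter_upwards [hdiam, hdis.eventually_lt_const (by linarith : (0 : ℝ) < δ / 4),
    herr.eventually_lt_const ht.1, herr.eventually_lt_const (sub_pos.2 ht.2)]
    with n hn hdisδ hlo hhi
  calc dist (γ t) (γ' t)
      ≤ diam (medqg (xn n) (yn n) (Dn n) (4 * distortion (R n))) + 11 * distortion (R n)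
          + 6 * e n :=
        dist_le_diam_medqg_add (hXgeo n) (hRsurj n) (hR n) (hx n) (hy n) le_rfl
          ⟨hlo.le, by linarith⟩ hγ hγ'
    _ ≤ diam (medqg (xn n) (yn n) (Dn n) δ) + (11 * distortion (R n) + 6 * e n) := by
        have hδ' : 4 * distortion (R n) ≤ δ := by linarith
        linarith [diam_mono (medqg_mono (xn n) (yn n) (Dn n) hδ') (isBounded_medqg _ _ _ _)]
    _ ≤ ε + (11 * distortion (R n) + 6 * e n) := by linarith

theorem unique_median_point_on_geodesic_general
    (X : ℕ → Type*) [∀ n, MetricSpace (X n)]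
    (Y : Type*) [MetricSpace Y]
    (hXgeo : ∀ n, IsGeodesicSpace (X n)) (hYgeo : IsGeodesicSpace Y)
    (xn yn : ∀ n, X n) (x y : Y)
    (R : ∀ n, Set (X n × Y)) (hRc : ∀ n, IsCompact (R n))
    (hRcorr : ∀ n, IsCorrespondence (R n))
    (hx : ∀ n, (xn n, x) ∈ R n) (hy : ∀ n, (yn n, y) ∈ R n)
    (hdis : Tendsto (fun n => distortion (R n)) atTop (nhds 0))
    (Dn : ℕ → ℝ)
    (D : ℝ) (hD : D ∈ Set.Ioo (-(dist x y)) (dist x y))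
    (hDconv : Tendsto Dn atTop (nhds D))
    (hmed : ∀ ε : ℝ, 0 < ε → ∃ δ : ℝ, 0 < δ ∧
      ∀ᶠ n in atTop, Metric.diam (medqg (xn n) (yn n) (Dn n) δ) < ε) :
    ∃! z : Y, (dist x z - dist y z = D) ∧
      ∃ γ : ℝ → Y, IsGeodesicFromTo γ x y ∧ ∃ t ∈ Set.Icc (0 : ℝ) (dist x y), γ t = z := by
  set t := (dist x y + D) / 2
  have hDt : D = 2 * t - dist x y := by ring
  have ht : t ∈ Ioo 0 (dist x y) := ⟨by linarith [hD.1], by linarith [hD.2]⟩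
  obtain ⟨γ, hγ⟩ := hYgeo x y
  refine ⟨γ t, ⟨by rw [hγ.dist_sub_dist (Ioo_subset_Icc_self ht), hDt], γ, hγ, t,
    Ioo_subset_Icc_self ht, rfl⟩, ?_⟩
  rintro _ ⟨hz, γ', hγ', s, hs, rfl⟩
  obtain rfl : s = t := by linarith [hγ'.dist_sub_dist hs]
  exact hγ'.apply_eq_of_tendsto_distortion hXgeo (fun n => (hRc n).isBounded)
    (fun n => (hRcorr n).2) hx hy hdis (hDt ▸ hDconv) ht hmed hγ

/-- If marked compact geodesic spaces `(X_n, x_n, y_n)` converge to `(Y, x, y)` via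
compact correspondences of vanishing distortion, `D_n → D` with
`D_n ∈ (−d(x_n,y_n), d(x_n,y_n))`, `D ∈ (−d(x,y), d(x,y))`, and for every `ε > 0` there
is `δ > 0` such that eventually `diam(medqg^{D_n,δ}_{x_n y_n}(X_n)) < ε`, then there is
exactly one `D`-median point between `x` and `y` lying on some geodesic from `x`
to `y`. -/
theorem unique_median_point_on_geodesic
    (X : ℕ → Type*) [∀ n, MetricSpace (X n)] [∀ n, CompactSpace (X n)]
    [∀ n, Nonempty (X n)]
    (Y : Type*) [MetricSpace Y] [CompactSpace Y] [Nonempty Y]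
    (hXgeo : ∀ n, IsGeodesicSpace (X n)) (hYgeo : IsGeodesicSpace Y)
    (xn yn : ∀ n, X n) (x y : Y) (hxy : 0 < dist x y)
    (R : ∀ n, Set (X n × Y)) (hRc : ∀ n, IsCompact (R n))
    (hRcorr : ∀ n, IsCorrespondence (R n))
    (hx : ∀ n, (xn n, x) ∈ R n) (hy : ∀ n, (yn n, y) ∈ R n)
    (hdis : Tendsto (fun n => distortion (R n)) atTop (nhds 0))
    (Dn : ℕ → ℝ) (hDn : ∀ n, Dn n ∈ Set.Ioo (-(dist (xn n) (yn n))) (dist (xn n) (yn n)))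
    (D : ℝ) (hD : D ∈ Set.Ioo (-(dist x y)) (dist x y))
    (hDconv : Tendsto Dn atTop (nhds D))
    (hmed : ∀ ε : ℝ, 0 < ε → ∃ δ : ℝ, 0 < δ ∧
      ∀ᶠ n in atTop, Metric.diam (medqg (xn n) (yn n) (Dn n) δ) < ε) :
    ∃! z : Y, (dist x z - dist y z = D) ∧
      ∃ γ : ℝ → Y, IsGeodesicFromTo γ x y ∧ ∃ t ∈ Set.Icc (0 : ℝ) (dist x y), γ t = z :=
  unique_median_point_on_geodesic_general X Y hXgeo hYgeo xn yn x y R hRc hRcorr hx hy hdis Dn D hD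
    hDconv hmed
end
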